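/- Let Ω ⊆ ℂ be a nonempty open set, let X = (x₁, x₂, x₃, x₄) : Ω → ℝ⁴ be a C² map, let Ψ, f₁ : Ω → ℂ be C¹ functions, and let f₂ : Ω → ℂ be holomorphic, such that X_z = Ψ·(f₁ + f₂, −i·(f₁ − f₂), 1 − f₁f₂, 1 + f₁f₂) componentwise on Ω. Define M := x₁, N := x₃ + x₄, and h := f₂. Then M_{zz̄} = (Re h)·N_{zz̄} at every point of Ω. -/

import Mathlib

/-!
Reading off the components of `X_z` gives `(x₁)_z - i (x₂)_z = 2Ψ f₂ = f₂ N_z`. Applying `∂_z̄`,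
which annihilates the holomorphic `f₂`, yields `(x₁)_{zz̄} - i (x₂)_{zz̄} = f₂ N_{zz̄}`. For a real
`C²` function `P`, `P_{zz̄}` is real: conjugation swaps `∂_z` and `∂_z̄`, and these commute by the
symmetry of second derivatives. Taking real parts gives `M_{zz̄} = (Re f₂) N_{zz̄}`.
-/

open Complex

/-- Directional derivative of `f` in the direction `1` (the `u`-direction). -/
noncomputable def pdu (f : ℂ → ℂ) (z : ℂ) : ℂ := fderiv ℝ f z 1

/-- Directional derivative of `f` in the direction `i` (the `v`-direction). -/
noncomputable def pdv (f : ℂ → ℂ) (z : ℂ) : ℂ := fderiv ℝ f z Complex.I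

/-- Wirtinger derivative `f_z = (1/2)(∂_u f - i ∂_v f)`. -/
noncomputable def wz (f : ℂ → ℂ) (z : ℂ) : ℂ :=
  (1 / 2 : ℂ) * (pdu f z - Complex.I * pdv f z)

/-- Wirtinger derivative `f_z̄ = (1/2)(∂_u f + i ∂_v f)`. -/
noncomputable def wzb (f : ℂ → ℂ) (z : ℂ) : ℂ :=
  (1 / 2 : ℂ) * (pdu f z + Complex.I * pdv f z)

/-- Mixed Wirtinger derivative `f_{zz̄} = (f_z)_z̄`. -/
noncomputable def wzzb (f : ℂ → ℂ) (z : ℂ) : ℂ := wzb (fun w => wz f w) z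

/-- `P_z` for a real-valued function, regarded as ℂ-valued. -/
noncomputable def rz (P : ℂ → ℝ) (z : ℂ) : ℂ := wz (fun w => (P w : ℂ)) z

/-- `P_z̄` for a real-valued function, regarded as ℂ-valued. -/
noncomputable def rzb (P : ℂ → ℝ) (z : ℂ) : ℂ := wzb (fun w => (P w : ℂ)) z

/-- `P_{zz̄}` for a real-valued function, regarded as ℂ-valued. -/
noncomputable def rzzb (P : ℂ → ℝ) (z : ℂ) : ℂ := wzzb (fun w => (P w : ℂ)) z

/-- Weierstrass data of the first kind on `Ω`. -/
structure IsWD1 (Ω : Set ℂ) (g : ℂ → ℂ) (P Q : ℂ → ℝ) : Prop where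
  holo : ∀ z ∈ Ω, DifferentiableAt ℂ g z
  gne : ∀ z ∈ Ω, g z ≠ 0
  cP : ContDiffOn ℝ 2 P Ω
  cQ : ContDiffOn ℝ 2 Q Ω
  pde : ∀ z ∈ Ω, rzzb P z = ((‖g z‖ : ℂ)) ^ 2 * rzzb Q z
  nz : ∀ z ∈ Ω, rz P z - ((‖g z‖ : ℂ)) ^ 2 * rz Q z ≠ 0

/-- Weierstrass data of the second kind on `Ω`. -/
structure IsWD2 (Ω : Set ℂ) (h : ℂ → ℂ) (M N : ℂ → ℝ) : Prop where
  holo : ∀ z ∈ Ω, DifferentiableAt ℂ h z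
  hne : ∀ z ∈ Ω, h z ≠ 0
  cM : ContDiffOn ℝ 2 M Ω
  cN : ContDiffOn ℝ 2 N Ω
  pde : ∀ z ∈ Ω, rzzb M z = (((h z).re : ℂ)) * rzzb N z
  nz : ∀ z ∈ Ω, rz M z - (((h z).re : ℂ)) * rz N z ≠ 0

/-- Componentwise Wirtinger derivative `X_z` of an ℝ⁴-valued map. -/
noncomputable def vz (X : ℂ → Fin 4 → ℝ) (z : ℂ) : Fin 4 → ℂ :=
  fun i => rz (fun w => X w i) z

/-- Componentwise mixed Wirtinger derivative `X_{zz̄}` of an ℝ⁴-valued map. -/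
noncomputable def vzzb (X : ℂ → Fin 4 → ℝ) (z : ℂ) : Fin 4 → ℂ :=
  fun i => rzzb (fun w => X w i) z

/-- The ℂ-bilinear Lorentz form on ℂ⁴. -/
def lorC (x y : Fin 4 → ℂ) : ℂ := x 0 * y 0 + x 1 * y 1 + x 2 * y 2 - x 3 * y 3

/-- The Lorentz bilinear form on ℝ⁴. -/
def lorR (x y : Fin 4 → ℝ) : ℝ := x 0 * y 0 + x 1 * y 1 + x 2 * y 2 - x 3 * y 3

open ComplexConjugate Filter Topology

section Wirtinger

variable {f g : ℂ → ℂ} {z : ℂ}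

theorem Filter.EventuallyEq.wz_eq (h : f =ᶠ[𝓝 z] g) : wz f z = wz g z := by
  simp only [wz, pdu, pdv, h.fderiv_eq]

theorem Filter.EventuallyEq.wzb_eq (h : f =ᶠ[𝓝 z] g) : wzb f z = wzb g z := by
  simp only [wzb, pdu, pdv, h.fderiv_eq]

theorem wz_add (hf : DifferentiableAt ℝ f z) (hg : DifferentiableAt ℝ g z) :
    wz (fun w => f w + g w) z = wz f z + wz g z := by
  simp only [wz, pdu, pdv, fderiv_fun_add hf hg, add_apply]
  ring

theorem wzb_sub (hf : DifferentiableAt ℝ f z) (hg : DifferentiableAt ℝ g z) :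
    wzb (fun w => f w - g w) z = wzb f z - wzb g z := by
  simp only [wzb, pdu, pdv, fderiv_fun_sub hf hg, sub_apply]
  ring

theorem wzb_const_mul (hf : DifferentiableAt ℝ f z) (c : ℂ) :
    wzb (fun w => c * f w) z = c * wzb f z := by
  simp only [wzb, pdu, pdv, fderiv_const_mul hf c, smul_apply, smul_eq_mul]
  ring

theorem wzb_mul (hf : DifferentiableAt ℝ f z) (hg : DifferentiableAt ℝ g z) :
    wzb (fun w => f w * g w) z = wzb f z * g z + f z * wzb g z := by
  simp only [wzb, pdu, pdv, fderiv_fun_mul hf hg, add_apply, smul_apply, smul_eq_mul]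
  ring

theorem wzb_eq_zero_of_differentiableAt (hf : DifferentiableAt ℂ f z) : wzb f z = 0 := by
  have hR : fderiv ℝ f z = (fderiv ℂ f z).restrictScalars ℝ :=
    (hf.hasFDerivAt.restrictScalars ℝ).fderiv
  have hI : fderiv ℂ f z I = I * fderiv ℂ f z 1 := by simp [← smul_eq_mul]
  simp only [wzb, pdu, pdv, hR, ContinuousLinearMap.coe_restrictScalars', hI]
  linear_combination (1 / 2 : ℂ) * fderiv ℂ f z 1 * I_mul_I

theorem fderiv_conj_apply (hf : DifferentiableAt ℝ f z) (c : ℂ) :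
    fderiv ℝ (fun w => conj (f w)) z c = conj (fderiv ℝ f z c) :=
  congrArg (· c) (conjCLE.hasFDerivAt.comp z hf.hasFDerivAt).fderiv

theorem wz_conj (hf : DifferentiableAt ℝ f z) :
    wz (fun w => conj (f w)) z = conj (wzb f z) := by
  simp only [wz, wzb, pdu, pdv, fderiv_conj_apply hf, map_mul, map_add, conj_I, map_div₀,
    map_one, map_ofNat]
  ring

theorem wzb_conj (hf : DifferentiableAt ℝ f z) :
    wzb (fun w => conj (f w)) z = conj (wz f z) := by
  simp only [wz, wzb, pdu, pdv, fderiv_conj_apply hf, map_mul, map_sub, conj_I, map_div₀,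
    map_one, map_ofNat]
  ring

theorem ContDiffAt.hasFDerivAt_fderiv_apply (hf : ContDiffAt ℝ 2 f z) (c : ℂ) :
    HasFDerivAt (fun w => fderiv ℝ f w c) ((fderiv ℝ (fderiv ℝ f) z).flip c) z := by
  have hD : HasFDerivAt (fderiv ℝ f) (fderiv ℝ (fderiv ℝ f) z) z :=
    ((hf.fderiv_right (m := 1) (by norm_num)).differentiableAt one_ne_zero).hasFDerivAt
  simpa using hD.clm_apply (hasFDerivAt_const c z)

theorem ContDiffAt.hasFDerivAt_wz (hf : ContDiffAt ℝ 2 f z) :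
    HasFDerivAt (wz f) ((1 / 2 : ℂ) •
      ((fderiv ℝ (fderiv ℝ f) z).flip 1 - I • (fderiv ℝ (fderiv ℝ f) z).flip I)) z :=
  ((hf.hasFDerivAt_fderiv_apply 1).sub ((hf.hasFDerivAt_fderiv_apply I).const_smul I)).const_smul
    (1 / 2 : ℂ)

theorem ContDiffAt.hasFDerivAt_wzb (hf : ContDiffAt ℝ 2 f z) :
    HasFDerivAt (wzb f) ((1 / 2 : ℂ) •
      ((fderiv ℝ (fderiv ℝ f) z).flip 1 + I • (fderiv ℝ (fderiv ℝ f) z).flip I)) z :=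
  ((hf.hasFDerivAt_fderiv_apply 1).add ((hf.hasFDerivAt_fderiv_apply I).const_smul I)).const_smul
    (1 / 2 : ℂ)

theorem ContDiffAt.wz_wzb_comm (hf : ContDiffAt ℝ 2 f z) : wz (wzb f) z = wzb (wz f) z := by
  have hsymm : fderiv ℝ (fderiv ℝ f) z I 1 = fderiv ℝ (fderiv ℝ f) z 1 I :=
    hf.isSymmSndFDerivAt (by simp [minSmoothness_of_isRCLikeNormedField]) I 1
  simp only [wz, wzb, pdu, pdv, hf.hasFDerivAt_wz.fderiv, hf.hasFDerivAt_wzb.fderiv]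
  simp only [smul_apply, add_apply, sub_apply, ContinuousLinearMap.flip_apply, smul_eq_mul, hsymm]
  ring

end Wirtinger

theorem ContDiffAt.ofReal_comp {E : Type*} [NormedAddCommGroup E] [NormedSpace ℝ E]
    {n : WithTop ℕ∞} {P : E → ℝ} {x : E} (hP : ContDiffAt ℝ n P x) :
    ContDiffAt ℝ n (fun y => (P y : ℂ)) x :=
  ofRealCLM.contDiff.contDiffAt.comp x hP

section RealValued

variable {P Q R : ℂ → ℝ} {z : ℂ}

theorem rz_add (hP : DifferentiableAt ℝ P z) (hQ : DifferentiableAt ℝ Q z) :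
    rz (fun w => P w + Q w) z = rz P z + rz Q z := by
  simp only [rz, ofReal_add]
  exact wz_add (ofRealCLM.differentiableAt.comp z hP) (ofRealCLM.differentiableAt.comp z hQ)

theorem ContDiffAt.conj_rzzb (hP : ContDiffAt ℝ 2 P z) : conj (rzzb P z) = rzzb P z := by
  set F : ℂ → ℂ := fun w => (P w : ℂ)
  have hF : ContDiffAt ℝ 2 F z := hP.ofReal_comp
  have hconj : (fun w => conj (wz F w)) =ᶠ[𝓝 z] wzb F := by
    filter_upwards [hP.eventually (by simp)] with w hw
    simpa [F] using (wzb_conj (hw.ofReal_comp.differentiableAt two_ne_zero)).symm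
  calc conj (rzzb P z) = wz (fun w => conj (wz F w)) z :=
        (wz_conj hF.hasFDerivAt_wz.differentiableAt).symm
    _ = wz (wzb F) z := hconj.wz_eq
    _ = rzzb P z := hF.wz_wzb_comm

theorem rzzb_eq_re_mul_rzzb {g : ℂ → ℂ} (hP : ContDiffAt ℝ 2 P z) (hQ : ContDiffAt ℝ 2 Q z)
    (hR : ContDiffAt ℝ 2 R z) (hg : DifferentiableAt ℂ g z)
    (hPQR : (fun w => rz P w - I * rz Q w) =ᶠ[𝓝 z] fun w => g w * rz R w) :
    rzzb P z = (g z).re * rzzb R z := by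
  have hdiff {S : ℂ → ℝ} (hS : ContDiffAt ℝ 2 S z) : DifferentiableAt ℝ (rz S) z :=
    hS.ofReal_comp.hasFDerivAt_wz.differentiableAt
  have key : rzzb P z - I * rzzb Q z = g z * rzzb R z :=
    calc rzzb P z - I * rzzb Q z = wzb (fun w => rz P w - I * rz Q w) z := by
          rw [wzb_sub (hdiff hP) ((hdiff hQ).const_mul I), wzb_const_mul (hdiff hQ)]; rfl
      _ = wzb (fun w => g w * rz R w) z := hPQR.wzb_eq
      _ = g z * rzzb R z := by
          rw [wzb_mul (hg.restrictScalars ℝ) (hdiff hR), wzb_eq_zero_of_differentiableAt hg,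
            zero_mul, zero_add]
          rfl
  have key_conj := congrArg conj key
  simp only [map_sub, map_mul, conj_I, hP.conj_rzzb, hQ.conj_rzzb, hR.conj_rzzb] at key_conj
  rw [re_eq_add_conj]
  linear_combination key / 2 + key_conj / 2

end RealValued

theorem stmt_10_general (Ω : Set ℂ) (hΩopen : IsOpen Ω)
    (X : ℂ → Fin 4 → ℝ) (hX : ∀ i, ContDiffOn ℝ 2 (fun w => X w i) Ω)
    (Ψ f₁ f₂ : ℂ → ℂ)
    (hf₂ : ∀ z ∈ Ω, DifferentiableAt ℂ f₂ z)
    (hrep : ∀ z ∈ Ω, ∀ i, vz X z i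
      = Ψ z * ![f₁ z + f₂ z, -Complex.I * (f₁ z - f₂ z),
          1 - f₁ z * f₂ z, 1 + f₁ z * f₂ z] i)
    (M N : ℂ → ℝ) (hM : M = fun z => X z 0) (hN : N = fun z => X z 2 + X z 3)
    (h : ℂ → ℂ) (hh : h = f₂) :
    ∀ z ∈ Ω, rzzb M z = (((h z).re : ℂ)) * rzzb N z := by
  subst hM hN
  rw [hh]
  intro z hz
  have hC2 (i : Fin 4) {w : ℂ} (hw : w ∈ Ω) : ContDiffAt ℝ 2 (fun w => X w i) w :=
    (hX i).contDiffAt (hΩopen.mem_nhds hw)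
  refine rzzb_eq_re_mul_rzzb (hC2 0 hz) (hC2 1 hz) ((hC2 2 hz).add (hC2 3 hz)) (hf₂ z hz) ?_
  filter_upwards [hΩopen.mem_nhds hz] with w hw
  have hX_z (i : Fin 4) : rz (fun w => X w i) w = _ := hrep w hw i
  rw [rz_add ((hC2 2 hw).differentiableAt two_ne_zero) ((hC2 3 hw).differentiableAt two_ne_zero),
    hX_z 0, hX_z 1, hX_z 2, hX_z 3]
  simp only [Matrix.cons_val]
  linear_combination Ψ w * (f₁ w - f₂ w) * I_sq

/-- Reduction of the Liu integrable system to the second-kind Weierstrass equation. -/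
theorem stmt_10 (Ω : Set ℂ) (hΩne : Ω.Nonempty) (hΩopen : IsOpen Ω)
    (X : ℂ → Fin 4 → ℝ) (hX : ∀ i, ContDiffOn ℝ 2 (fun w => X w i) Ω)
    (Ψ f₁ f₂ : ℂ → ℂ)
    (hΨ : ContDiffOn ℝ 1 Ψ Ω) (hf₁ : ContDiffOn ℝ 1 f₁ Ω)
    (hf₂ : ∀ z ∈ Ω, DifferentiableAt ℂ f₂ z)
    (hrep : ∀ z ∈ Ω, ∀ i, vz X z i
      = Ψ z * ![f₁ z + f₂ z, -Complex.I * (f₁ z - f₂ z),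
          1 - f₁ z * f₂ z, 1 + f₁ z * f₂ z] i)
    (M N : ℂ → ℝ) (hM : M = fun z => X z 0) (hN : N = fun z => X z 2 + X z 3)
    (h : ℂ → ℂ) (hh : h = f₂) :
    ∀ z ∈ Ω, rzzb M z = (((h z).re : ℂ)) * rzzb N z :=
  stmt_10_general Ω hΩopen X hX Ψ f₁ f₂ hf₂ hrep M N hM hN h hh
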